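/- Let S ⊂ P³ be the cubic surface W²X + X²Y + Y²Z + Z²W = 0 and ζ a primitive 5th root of unity. The automorphism g: (W:X:Y:Z) ↦ (W : ζX : ζ⁻¹Y : ζ³Z) preserves S and fixes exactly 4 points of S, namely the coordinate points (1:0:0:0), (0:1:0:0), (0:0:1:0), (0:0:0:1); the automorphism h: (W:X:Y:Z) ↦ (X:Y:Z:W) also preserves S and permutes these 4 points cyclically. Hence every orbit of the group ⟨g, h⟩ on S has size at least 4. -/

import Mathlib

open Matrix

/-- Projective equality of homogeneous coordinate vectors. -/
def ProjEq {n : ℕ} (v w : Fin n → ℂ) : Prop := ∃ c : ℂ, c ≠ 0 ∧ w = c • v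

/-- The Clebsch cubic form `W²X + X²Y + Y²Z + Z²W` in coordinates
`(W, X, Y, Z) = (v 0, v 1, v 2, v 3)`. -/
def clebsch (v : Fin 4 → ℂ) : ℂ :=
  v 0 ^ 2 * v 1 + v 1 ^ 2 * v 2 + v 2 ^ 2 * v 3 + v 3 ^ 2 * v 0

/-- The diagonal matrix of `g : (W:X:Y:Z) ↦ (W : ζX : ζ⁻¹Y : ζ³Z)`. -/
noncomputable def gMat (ζ : ℂ) : Matrix (Fin 4) (Fin 4) ℂ :=
  Matrix.diagonal ![1, ζ, ζ⁻¹, ζ ^ 3]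

/-- The matrix of the cyclic substitution `h : (W:X:Y:Z) ↦ (X:Y:Z:W)`. -/
def hMat : Matrix (Fin 4) (Fin 4) ℂ :=
  !![0, 1, 0, 0; 0, 0, 1, 0; 0, 0, 0, 1; 1, 0, 0, 0]

/-!
`g` is diagonal with entries `ζ⁰, ζ¹, ζ⁴, ζ³`, and their `k`-th powers stay pairwise distinct
for `0 < k < 5`. If `v` has two nonzero coordinates `i ≠ j`, then `gᵃv ~ gᵇv` would force
`(dᵢ/dⱼ)^(b-a) = 1`; so such a point has the four distinct images `v, gv, g²v, g³v`. A
coordinate point is fixed by `g`, and `h` moves it through all four coordinate points.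
-/

section ProjectiveCoordinates

variable {n : ℕ}

lemma exists_two_ne_zero_of_not_projEq_single {v : Fin n → ℂ} (hv : v ≠ 0)
    (hv₁ : ¬ ∃ i, ProjEq (Pi.single i 1) v) : ∃ i j, i ≠ j ∧ v i ≠ 0 ∧ v j ≠ 0 := by
  obtain ⟨i, hi⟩ : ∃ i, v i ≠ 0 := by simpa [funext_iff] using hv
  by_contra! hsupp
  refine hv₁ ⟨i, v i, hi, funext fun j => ?_⟩
  rcases eq_or_ne j i with rfl | hji
  · simp
  · simp [hsupp i j hji.symm hi, hji]

-- `b i / a i = b j / a j`, cross-multiplied so that no entry of `a` has to be nonzero.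
lemma ProjEq.diagonal_mulVec_mul_eq {a b v : Fin n → ℂ} {i j : Fin n} (hi : v i ≠ 0)
    (hj : v j ≠ 0) (h : ProjEq (diagonal a *ᵥ v) (diagonal b *ᵥ v)) :
    a j * b i = a i * b j := by
  obtain ⟨c, -, hc⟩ := h
  have hc' (k : Fin n) : b k * v k = c * (a k * v k) := by
    simpa [mulVec_diagonal] using congrFun hc k
  have hbi : b i = c * a i := mul_right_cancel₀ hi (by rw [hc' i]; ring)
  have hbj : b j = c * a j := mul_right_cancel₀ hj (by rw [hc' j]; ring)
  rw [hbi, hbj]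
  ring

lemma not_projEq_diagonal_pow_mulVec {d v : Fin n → ℂ} {k : ℕ} (hd : ∀ i, d i ≠ 0)
    (hdk : Function.Injective fun i => d i ^ k) (hv : v ≠ 0)
    (hv₁ : ¬ ∃ i, ProjEq (Pi.single i 1) v) (m : ℕ) :
    ¬ ProjEq (diagonal d ^ m *ᵥ v) (diagonal d ^ (m + k) *ᵥ v) := by
  intro h
  obtain ⟨i, j, hij, hi, hj⟩ := exists_two_ne_zero_of_not_projEq_single hv hv₁
  rw [diagonal_pow, diagonal_pow] at h
  have hmul := h.diagonal_mulVec_mul_eq hi hj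
  simp only [Pi.pow_apply, pow_add] at hmul
  refine hij (hdk ?_)
  have hdm : (d i * d j) ^ m ≠ 0 := pow_ne_zero _ (mul_ne_zero (hd i) (hd j))
  exact mul_left_cancel₀ hdm (by linear_combination hmul)

lemma projEq_diagonal_mulVec_of_projEq_single {d v : Fin n → ℂ} {i : Fin n} (hd : d i ≠ 0)
    (hv : ProjEq (Pi.single i 1) v) : ProjEq v (diagonal d *ᵥ v) := by
  obtain ⟨c, -, rfl⟩ := hv
  refine ⟨d i, hd, funext fun j => ?_⟩
  rcases eq_or_ne j i with rfl | hji
  · simp [mulVec_diagonal, mul_comm]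
  · simp [mulVec_diagonal, hji]

lemma not_projEq_smul_single {p q : Fin n} (hpq : p ≠ q) {c : ℂ} (hc : c ≠ 0) :
    ¬ ProjEq (c • Pi.single p (1 : ℂ)) (c • Pi.single q 1) := by
  rintro ⟨e, -, he⟩
  simpa [hpq, hc] using congrFun he q

lemma exists_four_not_projEq_of_pow {S : Submonoid (Matrix (Fin n) (Fin n) ℂ)}
    {M : Matrix (Fin n) (Fin n) ℂ} (hM : M ∈ S) {v : Fin n → ℂ}
    (hM₄ : ∀ a b : ℕ, a < b → b < 4 → ¬ ProjEq (M ^ a *ᵥ v) (M ^ b *ᵥ v)) :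
    ∃ A₁ A₂ A₃ A₄ : Matrix (Fin n) (Fin n) ℂ, A₁ ∈ S ∧ A₂ ∈ S ∧ A₃ ∈ S ∧ A₄ ∈ S ∧
      ¬ ProjEq (A₁ *ᵥ v) (A₂ *ᵥ v) ∧ ¬ ProjEq (A₁ *ᵥ v) (A₃ *ᵥ v) ∧
      ¬ ProjEq (A₁ *ᵥ v) (A₄ *ᵥ v) ∧ ¬ ProjEq (A₂ *ᵥ v) (A₃ *ᵥ v) ∧
      ¬ ProjEq (A₂ *ᵥ v) (A₄ *ᵥ v) ∧ ¬ ProjEq (A₃ *ᵥ v) (A₄ *ᵥ v) :=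
  ⟨M ^ 0, M ^ 1, M ^ 2, M ^ 3, pow_mem hM _, pow_mem hM _, pow_mem hM _, pow_mem hM _,
    hM₄ 0 1 (by norm_num) (by norm_num), hM₄ 0 2 (by norm_num) (by norm_num),
    hM₄ 0 3 (by norm_num) (by norm_num), hM₄ 1 2 (by norm_num) (by norm_num),
    hM₄ 1 3 (by norm_num) (by norm_num), hM₄ 2 3 (by norm_num) (by norm_num)⟩

end ProjectiveCoordinates

section Clebsch

variable {ζ : ℂ}

lemma inv_eq_pow_four (h5 : ζ ^ 5 = 1) : ζ⁻¹ = ζ ^ 4 :=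
  (eq_inv_of_mul_eq_one_left (by rw [← pow_succ, h5])).symm

lemma clebsch_gMat_mulVec (h5 : ζ ^ 5 = 1) (v : Fin 4 → ℂ) :
    clebsch (gMat ζ *ᵥ v) = ζ * clebsch v := by
  simp only [clebsch, gMat, inv_eq_pow_four h5, Fin.isValue, mulVec_diagonal, cons_val_zero,
    one_mul, cons_val_one, cons_val]
  linear_combination (ζ * v 1 ^ 2 * v 2 + ζ * (ζ ^ 5 + 1) * v 2 ^ 2 * v 3 +
    ζ * v 3 ^ 2 * v 0) * h5

lemma clebsch_hMat_mulVec (v : Fin 4 → ℂ) : clebsch (hMat *ᵥ v) = clebsch v := by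
  simp only [clebsch, mulVec, dotProduct, hMat, Fin.isValue, of_apply, cons_val',
    cons_val_fin_one, cons_val_zero, Fin.sum_univ_four, zero_mul, cons_val_one, one_mul, zero_add,
    cons_val, add_zero]
  ring

lemma hMat_mulVec_single (i : Fin 4) : hMat *ᵥ Pi.single i (1 : ℂ) = Pi.single (i - 1) 1 := by
  ext j
  fin_cases i <;> fin_cases j <;> simp [hMat, Pi.single_apply] <;> decide

open Fin.NatCast in
lemma hMat_pow_mulVec_single (k : ℕ) (i : Fin 4) :
    hMat ^ k *ᵥ Pi.single i (1 : ℂ) = Pi.single (i - (k : Fin 4)) 1 := by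
  induction k generalizing i with
  | zero => rw [pow_zero, one_mulVec, Nat.cast_zero, sub_zero]
  | succ k ih =>
    rw [pow_succ, ← mulVec_mulVec, hMat_mulVec_single, ih, Nat.cast_succ, sub_sub,
      add_comm (1 : Fin 4)]

def gExponent : Fin 4 → ℕ := ![0, 1, 4, 3]

lemma gMat_eq_diagonal (hζ : IsPrimitiveRoot ζ 5) :
    gMat ζ = diagonal fun i => ζ ^ gExponent i := by
  rw [gMat]
  congr 1
  funext i
  fin_cases i <;> simp [gExponent, inv_eq_pow_four hζ.pow_eq_one]

/-- The exponents `0, 1, 4, 3` of the entries of `gMat ζ` stay distinct mod 5 after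
multiplication by any `k` prime to 5. -/
lemma injective_gEntries_pow (hζ : IsPrimitiveRoot ζ 5) {k : ℕ} (hk₀ : 0 < k) (hk : k < 5) :
    Function.Injective fun i => (ζ ^ gExponent i) ^ k := by
  intro i j hij
  simp only [← pow_mul] at hij
  rw [(hζ.isOfFinOrder (by norm_num)).pow_eq_pow_iff_modEq, ← hζ.eq_orderOf] at hij
  revert i j
  interval_cases k <;> decide

open Fin.NatCast in
lemma hMat_pow_mulVec_not_projEq {v : Fin 4 → ℂ} (hv₁ : ∃ i, ProjEq (Pi.single i 1) v)
    {a b : ℕ} (hab : a < b) (hba : b < a + 4) :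
    ¬ ProjEq (hMat ^ a *ᵥ v) (hMat ^ b *ᵥ v) := by
  obtain ⟨i, c, hc, rfl⟩ := hv₁
  obtain ⟨k, rfl⟩ := Nat.exists_eq_add_of_lt hab
  simp only [mulVec_smul, hMat_pow_mulVec_single]
  refine not_projEq_smul_single ?_ hc
  rw [ne_eq, sub_right_inj, add_assoc, Nat.cast_add, left_eq_add]
  have hk : k < 3 := by omega
  interval_cases k <;> decide

lemma projEq_gMat_mulVec_iff (hζ : IsPrimitiveRoot ζ 5) {v : Fin 4 → ℂ} (hv : v ≠ 0) :
    ProjEq v (gMat ζ *ᵥ v) ↔ ∃ i, ProjEq (Pi.single i 1) v := by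
  have hentries (i : Fin 4) : ζ ^ gExponent i ≠ 0 := pow_ne_zero _ (hζ.ne_zero (by norm_num))
  rw [gMat_eq_diagonal hζ]
  constructor
  · intro h
    by_contra hv₁
    have hinj := injective_gEntries_pow hζ (k := 1) (by norm_num) (by norm_num)
    exact not_projEq_diagonal_pow_mulVec hentries hinj hv hv₁ 0 (by simpa using h)
  · rintro ⟨i, hi⟩
    exact projEq_diagonal_mulVec_of_projEq_single (hentries i) hi

lemma gMat_pow_mulVec_not_projEq (hζ : IsPrimitiveRoot ζ 5) {v : Fin 4 → ℂ} (hv : v ≠ 0)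
    (hv₁ : ¬ ∃ i, ProjEq (Pi.single i 1) v) {a b : ℕ} (hab : a < b) (hba : b < a + 5) :
    ¬ ProjEq (gMat ζ ^ a *ᵥ v) (gMat ζ ^ b *ᵥ v) := by
  obtain ⟨k, rfl⟩ := Nat.exists_eq_add_of_lt hab
  have hentries (i : Fin 4) : ζ ^ gExponent i ≠ 0 := pow_ne_zero _ (hζ.ne_zero (by norm_num))
  have hinj := injective_gEntries_pow hζ (k := k + 1) (by omega) (by omega)
  rw [gMat_eq_diagonal hζ, add_assoc]
  exact not_projEq_diagonal_pow_mulVec hentries hinj hv hv₁ a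

end Clebsch

/-- Let `S ⊂ ℙ³` be the cubic surface `W²X + X²Y + Y²Z + Z²W = 0` and `ζ` a
primitive 5th root of unity.  The automorphism
`g : (W:X:Y:Z) ↦ (W : ζX : ζ⁻¹Y : ζ³Z)` preserves `S` (it multiplies the
equation by `ζ`) and its fixed points on `S` are exactly the four coordinate
points; the automorphism `h : (W:X:Y:Z) ↦ (X:Y:Z:W)` also preserves `S` and
permutes the four coordinate points cyclically.  Hence every orbit of the
group `⟨g, h⟩` on `S` has size at least `4`. -/
theorem stmt_17 (ζ : ℂ) (hζ : IsPrimitiveRoot ζ 5) :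
    (∀ v : Fin 4 → ℂ, clebsch (gMat ζ *ᵥ v) = ζ * clebsch v) ∧
    (∀ v : Fin 4 → ℂ, clebsch (hMat *ᵥ v) = clebsch v) ∧
    (∀ v : Fin 4 → ℂ, v ≠ 0 → clebsch v = 0 →
      (ProjEq v (gMat ζ *ᵥ v) ↔ ∃ i : Fin 4, ProjEq (Pi.single i 1) v)) ∧
    (∀ i : Fin 4, hMat *ᵥ (Pi.single i (1 : ℂ)) = Pi.single (i - 1) 1) ∧
    (∀ v : Fin 4 → ℂ, v ≠ 0 → clebsch v = 0 →
      ∃ A₁ A₂ A₃ A₄ : Matrix (Fin 4) (Fin 4) ℂ,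
        A₁ ∈ Submonoid.closure {gMat ζ, hMat} ∧
        A₂ ∈ Submonoid.closure {gMat ζ, hMat} ∧
        A₃ ∈ Submonoid.closure {gMat ζ, hMat} ∧
        A₄ ∈ Submonoid.closure {gMat ζ, hMat} ∧
        ¬ ProjEq (A₁ *ᵥ v) (A₂ *ᵥ v) ∧ ¬ ProjEq (A₁ *ᵥ v) (A₃ *ᵥ v) ∧
        ¬ ProjEq (A₁ *ᵥ v) (A₄ *ᵥ v) ∧ ¬ ProjEq (A₂ *ᵥ v) (A₃ *ᵥ v) ∧
        ¬ ProjEq (A₂ *ᵥ v) (A₄ *ᵥ v) ∧ ¬ ProjEq (A₃ *ᵥ v) (A₄ *ᵥ v)) := by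
  refine ⟨clebsch_gMat_mulVec hζ.pow_eq_one, clebsch_hMat_mulVec,
    fun v hv _ => projEq_gMat_mulVec_iff hζ hv, hMat_mulVec_single, fun v hv _ => ?_⟩
  by_cases hv₁ : ∃ i, ProjEq (Pi.single i 1) v
  · exact exists_four_not_projEq_of_pow (Submonoid.subset_closure (by simp))
      fun a b hab hb => hMat_pow_mulVec_not_projEq hv₁ hab (by omega)
  · exact exists_four_not_projEq_of_pow (Submonoid.subset_closure (by simp))
      fun a b hab hb => gMat_pow_mulVec_not_projEq hζ hv hv₁ hab (by omega)
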